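/- Let k be a positive integer. For every S(2k-1)-space X, the pseudocharacter satisfies ψ(X) ≤ 2^{s_{2k-1}(X)}. -/

import Mathlib

open Cardinal Set

universe u

variable {X : Type u}

/-- `x` is S(n)-separated from `A`. -/
def SSep [TopologicalSpace X] : ℕ → X → Set X → Prop
  | 0, x, A => x ∉ closure A
  | (n+1), x, A => ∃ U : ℕ → Set X, (∀ i ≤ n, IsOpen (U i)) ∧ x ∈ U 0 ∧
      (∀ i < n, closure (U i) ⊆ U (i+1)) ∧ closure (U n) ∩ A = ∅

/-- `X` is an S(n)-space. -/
def SSpace (n : ℕ) (X : Type u) [TopologicalSpace X] : Prop :=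
  ∀ x y : X, x ≠ y → SSep n x {y}

/-- `U` is an S(2k-1)-neighborhood of `x` (for `k ≥ 1`). -/
def SOddNhd [TopologicalSpace X] (k : ℕ) (x : X) (U : Set X) : Prop :=
  ∃ V : ℕ → Set X, (∀ i < k, IsOpen (V i)) ∧ x ∈ V 0 ∧
    (∀ i, i + 1 < k → closure (V i) ⊆ V (i+1)) ∧ V (k-1) ⊆ U

/-- `U` is an S(2k)-neighborhood of `x` (for `k ≥ 1`). -/
def SEvenNhd [TopologicalSpace X] (k : ℕ) (x : X) (U : Set X) : Prop :=
  ∃ V : ℕ → Set X, (∀ i < k, IsOpen (V i)) ∧ x ∈ V 0 ∧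
    (∀ i, i + 1 < k → closure (V i) ⊆ V (i+1)) ∧ closure (V (k-1)) ⊆ U

/-- `U` is an open S(2k-1)-neighborhood of `x`. -/
def SOpenNhd [TopologicalSpace X] (k : ℕ) (x : X) (U : Set X) : Prop :=
  IsOpen U ∧ SOddNhd k x U

/-- `U` is an S(2k-1)-open set. -/
def SOpen [TopologicalSpace X] (k : ℕ) (U : Set X) : Prop :=
  IsOpen U ∧ ∃ x, SOddNhd k x U

/-- The S(2k-1)-closure `θ_{2k-1}(A)`. -/
def thetaOdd [TopologicalSpace X] (k : ℕ) (A : Set X) : Set X :=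
  {x | ∀ U : Set X, SOpenNhd k x U → (U ∩ A).Nonempty}

/-- The S(2k)-closure `θ_{2k}(A)`. -/
def thetaEven [TopologicalSpace X] (k : ℕ) (A : Set X) : Set X :=
  {x | ∀ U : Set X, SOpenNhd k x U → (closure U ∩ A).Nonempty}

/-- `D` is S(2k-1)-discrete. -/
def SOddDiscrete [TopologicalSpace X] (k : ℕ) (D : Set X) : Prop :=
  ∀ x ∈ D, ∃ U : Set X, SOpenNhd k x U ∧ U ∩ D = {x}

/-- `D` is S(2k)-discrete. -/
def SEvenDiscrete [TopologicalSpace X] (k : ℕ) (D : Set X) : Prop :=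
  ∀ x ∈ D, ∃ U : Set X, SOpenNhd k x U ∧ closure U ∩ D = {x}

/-- The S(2k-1)-spread `s_{2k-1}(X)`. -/
noncomputable def spreadOdd (k : ℕ) (X : Type u) [TopologicalSpace X] : Cardinal :=
  (⨆ D : {D : Set X // SOddDiscrete k D}, #D.1) ⊔ Cardinal.aleph0

/-- The S(2k)-spread `s_{2k}(X)`. -/
noncomputable def spreadEven (k : ℕ) (X : Type u) [TopologicalSpace X] : Cardinal :=
  (⨆ D : {D : Set X // SEvenDiscrete k D}, #D.1) ⊔ Cardinal.aleph0

/-- The S(2k-1)-cellularity `c_{2k-1}(X)`. -/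
noncomputable def cellOdd (k : ℕ) (X : Type u) [TopologicalSpace X] : Cardinal :=
  (⨆ F : {F : Set (Set X) // (∀ U ∈ F, SOpen k U ∧ U.Nonempty) ∧
      (∀ U ∈ F, ∀ V ∈ F, U ≠ V → U ∩ V = ∅)}, #F.1) ⊔ Cardinal.aleph0

/-- The S(2k)-cellularity `c_{2k}(X)`. -/
noncomputable def cellEven (k : ℕ) (X : Type u) [TopologicalSpace X] : Cardinal :=
  (⨆ F : {F : Set (Set X) // (∀ U ∈ F, SOpen k U ∧ U.Nonempty) ∧
      (∀ U ∈ F, ∀ V ∈ F, U ≠ V → closure U ∩ closure V = ∅)}, #F.1) ⊔ Cardinal.aleph0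

/-- The S(2k-1)-character `χ_{2k-1}(X)`. -/
noncomputable def charOdd (k : ℕ) (X : Type u) [TopologicalSpace X] : Cardinal :=
  sInf {c | Cardinal.aleph0 ≤ c ∧ ∀ x : X, ∃ B : Set (Set X), #B ≤ c ∧
    (∀ U ∈ B, SOpenNhd k x U) ∧
    ∀ U : Set X, SOpenNhd k x U → ∃ V ∈ B, V ⊆ U}

/-- The S(2k)-character `χ_{2k}(X)`. -/
noncomputable def charEven (k : ℕ) (X : Type u) [TopologicalSpace X] : Cardinal :=
  sInf {c | Cardinal.aleph0 ≤ c ∧ ∀ x : X, ∃ B : Set (Set X), #B ≤ c ∧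
    (∀ V ∈ B, IsClosed V ∧ SOddNhd k x V) ∧
    ∀ W : Set X, SOpenNhd k x W → ∃ V ∈ B, V ⊆ closure W}

/-- The S(2k-1)-pseudocharacter `ψ_{2k-1}(X)`. -/
noncomputable def psiOdd (k : ℕ) (X : Type u) [TopologicalSpace X] : Cardinal :=
  sInf {c | Cardinal.aleph0 ≤ c ∧ ∀ x : X, ∃ B : Set (Set X), #B ≤ c ∧
    (∀ U ∈ B, SOpenNhd k x U) ∧ ⋂₀ B = {x}}

/-- The S(2k)-pseudocharacter `ψ_{2k}(X)`. -/
noncomputable def psiEven (k : ℕ) (X : Type u) [TopologicalSpace X] : Cardinal :=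
  sInf {c | Cardinal.aleph0 ≤ c ∧ ∀ x : X, ∃ B : Set (Set X), #B ≤ c ∧
    (∀ U ∈ B, SOpenNhd k x U) ∧ (⋂ U ∈ B, closure U) = {x}}

/-- The usual pseudocharacter `ψ(X)`. -/
noncomputable def psi (X : Type u) [TopologicalSpace X] : Cardinal :=
  sInf {c | Cardinal.aleph0 ≤ c ∧ ∀ x : X, ∃ B : Set (Set X), #B ≤ c ∧
    (∀ U ∈ B, IsOpen U) ∧ ⋂₀ B = {x}}

/-!
Fix `x`. By S(2k-1)-separation every `y ≠ x` has an open S(2k-1)-neighbourhood `U y` whose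
closure misses an open S(2k-1)-neighbourhood of `x`. A Zorn argument yields an
S(2k-1)-discrete `D ⊆ X \ {x}` with `X \ {x} ⊆ θ(D) ∪ ⋃_{d ∈ D} U d`, and `#D ≤ s_{2k-1}(X)`.
The complements of the sets `θ(E)` with `E ⊆ D`, `x ∉ θ(E)`, together with the complements of
the closures of the `U d`, are at most `2^{s_{2k-1}(X)}` open sets with intersection `{x}`:
a point `z ∈ θ(D) \ {x}` lies in `θ(D ∩ U z)`, which misses `x`.
-/

theorem exists_maximal_pairwise_subset {α : Type*} (G : Set α) (r : α → α → Prop) :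
    ∃ P, Maximal (fun P => P ⊆ G ∧ P.Pairwise r) P :=
  zorn_subset _ fun c hcG hc =>
    ⟨⋃₀ c, ⟨sUnion_subset fun _ hs => (hcG hs).1,
      hc.pairwise_sUnion.mpr fun _ hs => (hcG hs).2⟩,
      fun _ => subset_sUnion_of_mem⟩

theorem closure_compl_closure_subset_compl {Y : Type*} [TopologicalSpace Y] {s : Set Y}
    (hs : IsOpen s) : closure (closure s)ᶜ ⊆ sᶜ := by
  rw [closure_compl]
  exact compl_subset_compl.mpr hs.subset_interior_closure

section

variable [TopologicalSpace X] {k : ℕ} {x : X} {U W : Set X}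

theorem SOddNhd.mem (hk : 1 ≤ k) (h : SOddNhd k x U) : x ∈ U := by
  obtain ⟨V, -, hx, hchain, hV⟩ := h
  have hmem : ∀ i < k, x ∈ V i := by
    intro i hi
    induction i with
    | zero => exact hx
    | succ i ih => exact hchain i hi (subset_closure (ih (by omega)))
  exact hV (hmem (k - 1) (by omega))

theorem SOpenNhd.mem (hk : 1 ≤ k) (h : SOpenNhd k x U) : x ∈ U :=
  h.2.mem hk

theorem SOddNhd.inter (hU : SOddNhd k x U) (hW : SOddNhd k x W) : SOddNhd k x (U ∩ W) := by
  obtain ⟨V, hVo, hxV, hV, hVU⟩ := hU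
  obtain ⟨V', hVo', hxV', hV', hVW⟩ := hW
  exact ⟨fun i => V i ∩ V' i, fun i hi => (hVo i hi).inter (hVo' i hi), ⟨hxV, hxV'⟩,
    fun i hi => subset_inter ((closure_mono inter_subset_left).trans (hV i hi))
      ((closure_mono inter_subset_right).trans (hV' i hi)),
    inter_subset_inter hVU hVW⟩

theorem SOpenNhd.inter (hU : SOpenNhd k x U) (hW : SOpenNhd k x W) : SOpenNhd k x (U ∩ W) :=
  ⟨hU.1.inter hW.1, hU.2.inter hW.2⟩

theorem subset_thetaOdd (hk : 1 ≤ k) (A : Set X) : A ⊆ thetaOdd k A :=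
  fun a ha _ hU => ⟨a, hU.mem hk, ha⟩

theorem isClosed_thetaOdd (hk : 1 ≤ k) (A : Set X) : IsClosed (thetaOdd k A) := by
  refine isOpen_compl_iff.mp (isOpen_iff_forall_mem_open.mpr fun y hy => ?_)
  simp only [thetaOdd, mem_compl_iff, mem_ofPred_eq, not_forall] at hy
  obtain ⟨U, ⟨hUo, V, hVo, hyV, hV, hVU⟩, hUA⟩ := hy
  exact ⟨V 0, fun z hz hzA => hUA (hzA U ⟨hUo, V, hVo, hz, hV, hVU⟩), hVo 0 hk, hyV⟩

theorem mem_thetaOdd_inter {A : Set X} (hx : x ∈ thetaOdd k A) (hU : SOpenNhd k x U) :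
    x ∈ thetaOdd k (A ∩ U) := fun W hW => by
  obtain ⟨z, ⟨hzW, hzU⟩, hzA⟩ := hx _ (hW.inter hU)
  exact ⟨z, hzW, hzA, hzU⟩

theorem exists_sOddDiscrete_subset_cover (hk : 1 ≤ k) (A : Set X) (V : X → Set X)
    (hV : ∀ y ∈ A, SOpenNhd k y (V y)) :
    ∃ D ⊆ A, SOddDiscrete k D ∧ A ⊆ thetaOdd k D ∪ ⋃ d ∈ D, V d := by
  -- a maximal family of pairs (point of `A`, neighbourhood inside `V` isolating it from the others)
  set G : Set (X × Set X) := {p | p.1 ∈ A ∧ SOpenNhd k p.1 p.2 ∧ p.2 ⊆ V p.1}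
  obtain ⟨P, ⟨hPG, hP⟩, hPmax⟩ := exists_maximal_pairwise_subset G (fun p q => q.1 ∉ p.2)
  refine ⟨Prod.fst '' P, ?_, ?_, ?_⟩
  · rintro _ ⟨p, hp, rfl⟩
    exact (hPG hp).1
  · rintro _ ⟨p, hp, rfl⟩
    refine ⟨p.2, (hPG hp).2.1,
      eq_singleton_iff_unique_mem.mpr ⟨⟨(hPG hp).2.1.mem hk, p, hp, rfl⟩, ?_⟩⟩
    rintro _ ⟨hq, q, hqP, rfl⟩
    by_contra hne
    exact hP hp hqP (fun hpq => hne (hpq ▸ rfl)) hq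
  · intro a haA
    by_contra hcov
    simp only [mem_union, mem_iUnion₂, not_or, not_exists] at hcov
    obtain ⟨haθ, haV⟩ := hcov
    obtain ⟨W, hW, hWD⟩ : ∃ W, SOpenNhd k a W ∧ W ∩ Prod.fst '' P = ∅ := by
      simpa [thetaOdd, nonempty_iff_ne_empty] using haθ
    have hsub : insert (a, W ∩ V a) P ⊆ G :=
      insert_subset ⟨haA, hW.inter (hV a haA), inter_subset_right⟩ hPG
    have hpw : (insert (a, W ∩ V a) P).Pairwise fun p q => q.1 ∉ p.2 :=
      pairwise_insert.mpr ⟨hP, fun q hq _ =>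
        ⟨fun hqa => (eq_empty_iff_forall_notMem.mp hWD) q.1 ⟨hqa.1, q, hq, rfl⟩,
          fun haq => haV q.1 ⟨q, hq, rfl⟩ ((hPG hq).2.2 haq)⟩⟩
    have haP : (a, W ∩ V a) ∈ P := hPmax ⟨hsub, hpw⟩ (subset_insert _ _) (mem_insert _ _)
    exact haθ (subset_thetaOdd hk _ ⟨_, haP, rfl⟩)

theorem SSep.exists_sOpenNhd_compl_closure {m : ℕ} {y : X} (h : SSep (2 * m + 1) y {x}) :
    ∃ U, SOpenNhd (m + 1) y U ∧ SOpenNhd (m + 1) x (closure U)ᶜ := by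
  obtain ⟨Z, hZo, hyZ, hZ, hxZ⟩ := h
  refine ⟨Z m, ⟨hZo m (by omega), Z, fun i hi => hZo i (by omega), hyZ,
    fun i hi => hZ i (by omega), subset_rfl⟩, isClosed_closure.isOpen_compl, ?_⟩
  -- the chain of `y`, read backwards and complemented, is a chain at `x`
  refine ⟨fun j => (closure (Z (2 * m - j)))ᶜ, fun _ _ => isClosed_closure.isOpen_compl,
    fun hx => hxZ.subset ⟨hx, rfl⟩, fun j hj => ?_, ?_⟩
  · have hstep := hZ (2 * m - (j + 1)) (by omega)
    rw [show 2 * m - (j + 1) + 1 = 2 * m - j by omega] at hstep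
    exact (closure_compl_closure_subset_compl (hZo _ (by omega))).trans
      (compl_subset_compl.mpr hstep)
  · simp only [Nat.add_sub_cancel, show 2 * m - m = m by omega, subset_rfl]

theorem SSpace.exists_sOpenNhd_compl_closure (hk : 1 ≤ k) (h : SSpace (2 * k - 1) X) {y : X}
    (hyx : y ≠ x) : ∃ U, SOpenNhd k y U ∧ SOpenNhd k x (closure U)ᶜ := by
  obtain ⟨m, rfl⟩ : ∃ m, k = m + 1 := ⟨k - 1, by omega⟩
  exact SSep.exists_sOpenNhd_compl_closure (by simpa [mul_add] using h y x hyx)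

theorem aleph0_le_spreadOdd (k : ℕ) (X : Type u) [TopologicalSpace X] :
    ℵ₀ ≤ spreadOdd k X :=
  le_sup_right

theorem mk_le_spreadOdd {D : Set X} (hD : SOddDiscrete k D) : #D ≤ spreadOdd k X :=
  (le_ciSup (bddAbove_of_small) (⟨D, hD⟩ : {D : Set X // SOddDiscrete k D})).trans le_sup_left

def separatingFamily (k : ℕ) (x : X) (D : Set X) (U : X → Set X) : Set (Set X) :=
  (fun E => (thetaOdd k E)ᶜ) '' (𝒫 D ∩ {E | x ∉ thetaOdd k E}) ∪
    (fun d => (closure (U d))ᶜ) '' D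

theorem isOpen_of_mem_separatingFamily (hk : 1 ≤ k) {D : Set X} {U : X → Set X}
    (hW : W ∈ separatingFamily k x D U) : IsOpen W := by
  rcases hW with ⟨E, -, rfl⟩ | ⟨d, -, rfl⟩
  · exact (isClosed_thetaOdd hk E).isOpen_compl
  · exact isClosed_closure.isOpen_compl

theorem mk_separatingFamily_le {D : Set X} {U : X → Set X} {κ : Cardinal} (hκ : ℵ₀ ≤ κ)
    (hD : #D ≤ κ) : #(separatingFamily k x D U) ≤ 2 ^ κ := by
  have h2κ : ℵ₀ ≤ 2 ^ κ := hκ.trans (cantor κ).le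
  have hθ : #((fun E => (thetaOdd k E)ᶜ) '' (𝒫 D ∩ {E | x ∉ thetaOdd k E})) ≤ 2 ^ κ :=
    calc _ ≤ #(𝒫 D) := mk_image_le.trans (mk_le_mk_of_subset inter_subset_left)
      _ = 2 ^ #D := mk_powerset D
      _ ≤ 2 ^ κ := power_le_power_left two_ne_zero hD
  calc _ ≤ 2 ^ κ + 2 ^ κ := (mk_union_le _ _).trans
        (add_le_add hθ (mk_image_le.trans (hD.trans (cantor κ).le)))
    _ = 2 ^ κ := add_eq_self h2κ

theorem sInter_separatingFamily (hk : 1 ≤ k) {D : Set X} {U : X → Set X}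
    (hU : ∀ y ∈ ({x}ᶜ : Set X), SOpenNhd k y (U y) ∧ SOpenNhd k x (closure (U y))ᶜ)
    (hDx : D ⊆ {x}ᶜ) (hcov : {x}ᶜ ⊆ thetaOdd k D ∪ ⋃ d ∈ D, U d) :
    ⋂₀ separatingFamily k x D U = {x} := by
  refine subset_antisymm (fun z hz => ?_) ?_
  · by_contra hzx
    rcases hcov hzx with hzθ | hzU
    · have hxE : x ∉ thetaOdd k (D ∩ U z) := fun hx => by
        obtain ⟨w, hw, -, hwU⟩ := hx _ (hU z hzx).2
        exact hw (subset_closure hwU)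
      exact hz _ (Or.inl ⟨_, ⟨inter_subset_left, hxE⟩, rfl⟩)
        (mem_thetaOdd_inter hzθ (hU z hzx).1)
    · obtain ⟨d, hd, hzd⟩ := mem_iUnion₂.mp hzU
      exact hz _ (Or.inr ⟨d, hd, rfl⟩) (subset_closure hzd)
  · rintro _ rfl _ (⟨E, ⟨-, hxE⟩, rfl⟩ | ⟨d, hd, rfl⟩)
    · exact hxE
    · exact (hU d (hDx hd)).2.mem hk

theorem SSpace.exists_isOpen_sInter_eq_singleton (hk : 1 ≤ k) (h : SSpace (2 * k - 1) X)
    (x : X) :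
    ∃ B : Set (Set X), #B ≤ 2 ^ spreadOdd k X ∧ (∀ W ∈ B, IsOpen W) ∧ ⋂₀ B = {x} := by
  choose! U hU using fun y (hy : y ∈ ({x}ᶜ : Set X)) => h.exists_sOpenNhd_compl_closure hk hy
  obtain ⟨D, hDx, hD, hcov⟩ := exists_sOddDiscrete_subset_cover hk _ U fun y hy => (hU y hy).1
  exact ⟨separatingFamily k x D U,
    mk_separatingFamily_le (aleph0_le_spreadOdd k X) (mk_le_spreadOdd hD),
    fun _ => isOpen_of_mem_separatingFamily hk, sInter_separatingFamily hk hU hDx hcov⟩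

end

theorem stmt13 (k : ℕ) (hk : 1 ≤ k) (X : Type u) [TopologicalSpace X]
    (h : SSpace (2 * k - 1) X) :
    psi X ≤ 2 ^ spreadOdd k X :=
  csInf_le' ⟨(aleph0_le_spreadOdd k X).trans (cantor _).le,
    h.exists_isOpen_sInter_eq_singleton hk⟩
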